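/- (Linear independence of the electric and magnetic mode-1 tangent fields on any angular region; underlying Observation (2) of §6.2.) If a, b ∈ ℝ³ and (a − ⟨x,a⟩·x) + (x × b) = 0 for every point x of some nonempty open subset of S² (i.e. the tangent field Σₘ aₘ·Eₘ + Σₘ bₘ·Hₘ vanishes on that open set), then a = 0 and b = 0. -/

import Mathlib

/-!
Write `f x = (a - ⟪x, a⟫ x) + x × b`. For any `x, y`, antisymmetry of the triple product gives
`⟪f x, y⟫ + ⟪f y, x⟫ = (⟪x, a⟫ + ⟪y, a⟫) (1 - ⟪x, y⟫)`, and `⟪x, y⟫ < 1` for distinct unit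
vectors; so `⟪x, a⟫ = -⟪y, a⟫` for distinct `x, y ∈ U`. Since `U` has no isolated points,
letting `y → x` gives `⟪x, a⟫ = 0` on `U`. An open subset of the sphere spans `ℝ³` (its cone is
open), hence `a = 0`. Then `x × b = 0` on `U`, i.e. `x ⊥ b × c` for every `c`, so `b × c = 0`
for every `c` and `b = 0`.
-/

noncomputable section

/-- The cross product on Euclidean `ℝ³`. -/
def cross3 (x y : EuclideanSpace ℝ (Fin 3)) : EuclideanSpace ℝ (Fin 3) :=
  WithLp.toLp 2 ![x 1 * y 2 - x 2 * y 1, x 2 * y 0 - x 0 * y 2, x 0 * y 1 - x 1 * y 0]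

open Metric Filter Topology

open scoped RealInnerProductSpace

theorem IsOpen.eqOn_zero_of_add_eq_zero {X : Type*} [TopologicalSpace X] [PerfectSpace X]
    {g : X → ℝ} (hg : Continuous g) {U : Set X} (hU : IsOpen U)
    (h : ∀ x ∈ U, ∀ y ∈ U, x ≠ y → g x + g y = 0) : Set.EqOn g 0 U := by
  intro x hx
  have hlim : Tendsto g (𝓝[≠] x) (𝓝 (g x)) := hg.continuousAt.tendsto.mono_left nhdsWithin_le_nhds
  have hconst : g =ᶠ[𝓝[≠] x] fun _ ↦ -g x :=
    eventually_nhdsWithin_iff.2 <| eventually_of_mem (hU.mem_nhds hx) fun y hy hyx ↦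
      eq_neg_of_add_eq_zero_left (h y hy x hx hyx)
  have := tendsto_nhds_unique hlim (tendsto_const_nhds.congr' hconst.symm)
  simp only [Pi.zero_apply]
  linarith

theorem perfectSpace_sphere {E : Type*} [NormedAddCommGroup E] [NormedSpace ℝ E]
    (hE : 1 < Module.rank ℝ E) (x : E) {r : ℝ} (hr : 0 < r) : PerfectSpace (sphere x r) := by
  have : ConnectedSpace (sphere x r) :=
    isConnected_iff_connectedSpace.mp (isConnected_sphere hE x hr.le)
  have : Nontrivial E := rank_pos_iff_nontrivial.mp (zero_lt_one.trans hE)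
  obtain ⟨v, hv⟩ := (NormedSpace.sphere_nonempty (x := (0 : E))).2 hr.le
  have hv0 : v ≠ 0 := ne_zero_of_mem_sphere hr.ne' ⟨v, hv⟩
  have : Nontrivial (sphere x r) := by
    refine ⟨⟨⟨x + v, by simpa using hv⟩, ⟨x - v, by simpa using hv⟩, fun h ↦ hv0 ?_⟩⟩
    have hvv : v + v = 0 := by
      simpa [sub_eq_add_neg, eq_neg_iff_add_eq_zero] using congrArg Subtype.val h
    rw [← two_smul ℝ, smul_eq_zero] at hvv
    exact hvv.resolve_left two_ne_zero
  infer_instance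

theorem span_eq_top_of_isOpen_sphere {E : Type*} [NormedAddCommGroup E] [NormedSpace ℝ E]
    {U : Set (sphere (0 : E) 1)} (hU : IsOpen U) (hne : U.Nonempty) :
    Submodule.span ℝ (((↑) : sphere (0 : E) 1 → E) '' U) = ⊤ := by
  obtain ⟨V, hV, rfl⟩ := isOpen_induced_iff.mp hU
  obtain ⟨x₀, hx₀⟩ := hne
  set C : Set E := {x | x ≠ 0} ∩ (fun x ↦ ‖x‖⁻¹ • x) ⁻¹' V
  have hC : IsOpen C :=
    ((continuous_norm.continuousOn.inv₀ fun x hx ↦ norm_ne_zero_iff.2 hx).smul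
      continuousOn_id).isOpen_inter_preimage isOpen_ne hV
  have hCspan : C ⊆ Submodule.span ℝ (((↑) : sphere (0 : E) 1 → E) '' (Subtype.val ⁻¹' V)) := by
    rintro x ⟨hx0, hxV⟩
    have hx : ‖x‖⁻¹ • x ∈ sphere (0 : E) 1 := by simp [norm_smul, norm_ne_zero_iff.2 hx0]
    have hmem : ‖x‖⁻¹ • x ∈ ((↑) : sphere (0 : E) 1 → E) '' (Subtype.val ⁻¹' V) :=
      ⟨⟨_, hx⟩, hxV, rfl⟩
    have := Submodule.smul_mem (Submodule.span ℝ _) ‖x‖ (Submodule.subset_span hmem)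
    rwa [smul_smul, mul_inv_cancel₀ (norm_ne_zero_iff.2 hx0), one_smul] at this
  have hx₀C : (x₀ : E) ∈ C :=
    Set.mem_inter (ne_zero_of_mem_unit_sphere x₀) (by simpa [norm_eq_of_mem_sphere x₀] using hx₀)
  apply Submodule.eq_top_of_nonempty_interior'
  exact ⟨x₀, mem_interior.2 ⟨C, hCspan, hC, hx₀C⟩⟩

theorem eq_zero_of_forall_inner_eq_zero_of_isOpen_sphere {E : Type*} [NormedAddCommGroup E]
    [InnerProductSpace ℝ E] {U : Set (sphere (0 : E) 1)} (hU : IsOpen U) (hne : U.Nonempty)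
    {c : E} (h : ∀ x ∈ U, ⟪(x : E), c⟫ = 0) : c = 0 := by
  have : innerₛₗ ℝ c = 0 := LinearMap.ext_on (span_eq_top_of_isOpen_sphere hU hne) <| by
    rintro _ ⟨x, hx, rfl⟩
    simpa [real_inner_comm] using h x hx
  simpa using LinearMap.congr_fun this c

local notation "ℝ³" => EuclideanSpace ℝ (Fin 3)

lemma real_inner_fin_three (x y : ℝ³) : ⟪x, y⟫ = x 0 * y 0 + x 1 * y 1 + x 2 * y 2 := by
  simp only [PiLp.inner_apply, RCLike.inner_apply, Real.ringHom_apply, Fin.sum_univ_three]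
  ring

theorem inner_cross3_right (x y z : ℝ³) : ⟪x, cross3 y z⟫ = ⟪cross3 x y, z⟫ := by
  simp only [real_inner_fin_three, cross3, Matrix.cons_val_zero, Matrix.cons_val_one,
    Matrix.cons_val]
  ring

theorem inner_cross3_add_inner_cross3_swap (x y b : ℝ³) :
    ⟪cross3 x b, y⟫ + ⟪cross3 y b, x⟫ = 0 := by
  simp only [real_inner_fin_three, cross3, Matrix.cons_val_zero, Matrix.cons_val_one,
    Matrix.cons_val]
  ring

theorem eq_zero_of_forall_cross3_eq_zero {b : ℝ³} (h : ∀ c, cross3 b c = 0) : b = 0 := by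
  have h₁ := h (EuclideanSpace.single 1 1)
  have h₂ := h (EuclideanSpace.single 2 1)
  ext i
  fin_cases i
  · simpa [cross3] using congrArg (· 2) h₁
  · simpa [cross3] using congrArg (· 0) h₂
  · simpa [cross3] using congrArg (· 0) h₁

/-- The tangent field `Σₘ aₘ Eₘ + Σₘ bₘ Hₘ`. -/
def modeOneField (a b x : ℝ³) : ℝ³ := (a - ⟪x, a⟫ • x) + cross3 x b

theorem inner_modeOneField_add_inner_modeOneField (a b x y : ℝ³) :
    ⟪modeOneField a b x, y⟫ + ⟪modeOneField a b y, x⟫ = (⟪x, a⟫ + ⟪y, a⟫) * (1 - ⟪x, y⟫) := by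
  have := inner_cross3_add_inner_cross3_swap x y b
  simp only [modeOneField, inner_add_left, inner_sub_left, real_inner_smul_left] at this ⊢
  rw [real_inner_comm a y, real_inner_comm a x, real_inner_comm x y]
  linear_combination this

theorem inner_add_inner_eq_zero_of_modeOneField_eq_zero {a b x y : ℝ³} (hx : ‖x‖ = 1)
    (hy : ‖y‖ = 1) (hxy : x ≠ y) (hfx : modeOneField a b x = 0) (hfy : modeOneField a b y = 0) :
    ⟪x, a⟫ + ⟪y, a⟫ = 0 := by
  have hlt : ⟪x, y⟫ < 1 := (inner_lt_one_iff_real_of_norm_eq_one hx hy).2 hxy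
  have := inner_modeOneField_add_inner_modeOneField a b x y
  rw [hfx, hfy, inner_zero_left, inner_zero_left, add_zero] at this
  exact (mul_eq_zero.1 this.symm).resolve_right (by linarith)

/-- (Linear independence of the electric and magnetic mode-1
tangent fields on any angular region.) If `a, b ∈ ℝ³` and the tangent field
`x ↦ (a - ⟨x,a⟩·x) + (x × b)` (i.e. `Σₘ aₘ·Eₘ + Σₘ bₘ·Hₘ`) vanishes on some
nonempty open subset of the unit sphere `S² ⊆ ℝ³`, then `a = 0` and `b = 0`. -/
theorem mode_one_tangent_fields_linearly_independent_on_angular_region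
    (a b : EuclideanSpace ℝ (Fin 3))
    (U : Set (Metric.sphere (0 : EuclideanSpace ℝ (Fin 3)) 1))
    (hUopen : IsOpen U) (hUne : U.Nonempty)
    (hvanish : ∀ x ∈ U,
      (a - (inner ℝ (x : EuclideanSpace ℝ (Fin 3)) a : ℝ) • (x : EuclideanSpace ℝ (Fin 3)))
        + cross3 (x : EuclideanSpace ℝ (Fin 3)) b = 0) :
    a = 0 ∧ b = 0 := by
  have : PerfectSpace (sphere (0 : ℝ³) 1) := perfectSpace_sphere
    (by rw [← Module.finrank_eq_rank, finrank_euclideanSpace_fin]; norm_num) 0 one_pos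
  have ha_perp : Set.EqOn (fun x : sphere (0 : ℝ³) 1 ↦ ⟪(x : ℝ³), a⟫) 0 U :=
    hUopen.eqOn_zero_of_add_eq_zero (by fun_prop) fun x hx y hy hxy ↦
      inner_add_inner_eq_zero_of_modeOneField_eq_zero (norm_eq_of_mem_sphere x)
        (norm_eq_of_mem_sphere y) (Subtype.coe_injective.ne hxy) (hvanish x hx) (hvanish y hy)
  obtain rfl : a = 0 := eq_zero_of_forall_inner_eq_zero_of_isOpen_sphere hUopen hUne ha_perp
  refine ⟨rfl, eq_zero_of_forall_cross3_eq_zero fun c ↦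
    eq_zero_of_forall_inner_eq_zero_of_isOpen_sphere hUopen hUne fun x hx ↦ ?_⟩
  have hcross : cross3 x b = 0 := by simpa using hvanish x hx
  rw [inner_cross3_right, hcross, inner_zero_left]
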